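/- Let X be a real Banach space that is an L₁-predual, let F be a nonempty compact subset of X, and let V be a nonempty closed convex subset of X. Then rad_V(F) = rad_X(F) + d(V, cent_X(F)), where d(A,B) = inf{‖a − b‖ : a ∈ A, b ∈ B}. -/

import Mathlib

open Filter Topology MeasureTheory

/-- `r(x,B) = sup{‖x − b‖ : b ∈ B}`. -/
noncomputable def rMax {X : Type*} [NormedAddCommGroup X] (x : X) (B : Set X) : ℝ :=
  sSup ((fun b => ‖x - b‖) '' B)

/-- Restricted Chebyshev radius of `B` in `V`: `rad_V(B) = inf{r(v,B) : v ∈ V}`. -/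
noncomputable def chebRad {X : Type*} [NormedAddCommGroup X] (V B : Set X) : ℝ :=
  sInf ((fun v => rMax v B) '' V)

/-- Restricted Chebyshev centers of `B` in `V`: `{v ∈ V : r(v,B) = rad_V(B)}`. -/
def chebCent {X : Type*} [NormedAddCommGroup X] (V B : Set X) : Set X :=
  {v | v ∈ V ∧ rMax v B = chebRad V B}

/-- `diam(B) = sup{‖z₁ − z₂‖ : z₁, z₂ ∈ B}`. -/
noncomputable def setDiam {X : Type*} [NormedAddCommGroup X] (B : Set X) : ℝ :=
  sSup ((fun p : X × X => ‖p.1 - p.2‖) '' (B ×ˢ B))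

/-- `d(A,B) = inf{‖a − b‖ : a ∈ A, b ∈ B}`. -/
noncomputable def setDist' {X : Type*} [NormedAddCommGroup X] (A B : Set X) : ℝ :=
  sInf ((fun p : X × X => ‖p.1 - p.2‖) '' (A ×ˢ B))

universe u

/-- `X` is an `L₁`-predual: its dual is linearly isometric to some `L¹(μ)`. -/
def IsL1Predual (X : Type*) [NormedAddCommGroup X] [NormedSpace ℝ X] : Prop :=
  ∃ (Ω : Type u) (_ : MeasurableSpace Ω) (μ : Measure Ω),
    Nonempty (StrongDual ℝ X ≃ₗᵢ[ℝ] Lp ℝ 1 μ)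

open scoped ENNReal NNReal

section Transport

lemma transport_core {n : ℕ} (P N : Fin n → ℝ) (hPnn : ∀ k, 0 ≤ P k) (hNnn : ∀ k, 0 ≤ N k)
    (hSneg : ∑ k, N k = ∑ k, P k) (i : Fin n) :
    (∑ j, (P i * N j - P j * N i) / (∑ k, P k) = P i - N i)
    ∧ (∑ j, |(P i * N j - P j * N i) / (∑ k, P k)| ≤ P i + N i) := by
  set S : ℝ := ∑ k, P k with hS
  have hSnn : 0 ≤ S := Finset.sum_nonneg fun k _ => hPnn k
  rcases eq_or_lt_of_le hSnn with hS0 | hSpos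
  · have hPz : ∀ k, P k = 0 := fun k =>
      (Finset.sum_eq_zero_iff_of_nonneg (fun k _ => hPnn k)).1 hS0.symm k (Finset.mem_univ k)
    have hNz : ∀ k, N k = 0 := fun k =>
      (Finset.sum_eq_zero_iff_of_nonneg (fun k _ => hNnn k)).1 (hSneg.trans hS0.symm) k
        (Finset.mem_univ k)
    constructor
    · rw [Finset.sum_eq_zero fun j _ => by simp [hPz, hNz], hPz, hNz, sub_zero]
    · rw [Finset.sum_eq_zero fun j _ => by simp [hPz, hNz], hPz, hNz]
      simp
  · constructor
    · rw [← Finset.sum_div]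
      have h1 : ∑ j, (P i * N j - P j * N i) = P i * S - S * N i := by
        rw [Finset.sum_sub_distrib, ← Finset.mul_sum, ← Finset.sum_mul, hSneg]
      rw [h1, div_eq_iff (ne_of_gt hSpos)]
      ring
    · have hbd : ∀ j, |(P i * N j - P j * N i) / S| ≤ (P i * N j + P j * N i) / S := by
        intro j
        rw [abs_div, abs_of_pos hSpos]
        refine div_le_div_of_nonneg_right ?_ hSnn
        refine (abs_sub _ _).trans ?_
        rw [abs_of_nonneg (mul_nonneg (hPnn i) (hNnn j)),
          abs_of_nonneg (mul_nonneg (hPnn j) (hNnn i))]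
      calc ∑ j, |(P i * N j - P j * N i) / S| ≤ ∑ j, (P i * N j + P j * N i) / S :=
            Finset.sum_le_sum fun j _ => hbd j
        _ = (P i * S + S * N i) / S := by
            rw [← Finset.sum_div, Finset.sum_add_distrib, ← Finset.mul_sum, ← Finset.sum_mul,
              hSneg]
        _ = P i + N i := by field_simp

end Transport

section LpTransport

variable {Ω : Type*} [MeasurableSpace Ω] {μ : MeasureTheory.Measure Ω}

lemma lp_coeFn_sum {ι : Type*} (s : Finset ι) (g : ι → Lp ℝ 1 μ) :
    ⇑(∑ i ∈ s, g i) =ᵐ[μ] fun ω => ∑ i ∈ s, (g i : Ω → ℝ) ω := by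
  induction s using Finset.cons_induction with
  | empty => simp only [Finset.sum_empty]; exact Lp.coeFn_zero (E := ℝ) (p := 1) (μ := μ)
  | cons a s ha ih =>
    rw [Finset.sum_cons]
    filter_upwards [Lp.coeFn_add (g a) (∑ i ∈ s, g i), ih] with ω h1 h2
    simp only [Finset.sum_cons, h1, Pi.add_apply, h2]

theorem lp_transport {n : ℕ} (G : Fin n → Lp ℝ 1 μ) (hsum : ∑ i, G i = 0) :
    ∃ H : Fin n → Fin n → Lp ℝ 1 μ,
      (∀ i, ∑ j, H i j = G i) ∧ (∀ j, ∑ i, H i j = - G j) ∧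
      (∀ i, ∑ j, ‖H i j‖ ≤ ‖G i‖) ∧ (∀ j, ∑ i, ‖H i j‖ ≤ ‖G j‖) := by
  classical
  set f : Fin n → Ω → ℝ := fun i => ⇑(G i) with hf
  have hint : ∀ i, Integrable (f i) μ := fun i => L1.integrable_coeFn (G i)
  set hfun : Fin n → Fin n → Ω → ℝ := fun i j ω =>
    (max (f i ω) 0 * max (-(f j ω)) 0 - max (f j ω) 0 * max (-(f i ω)) 0)
      / (∑ k, max (f k ω) 0) with hhfun
  -- almost everywhere, the coordinates sum to zero
  have h0 : ∀ᵐ ω ∂μ, ∑ i, f i ω = 0 := by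
    have h1 := lp_coeFn_sum (Finset.univ) G
    rw [hsum] at h1
    filter_upwards [h1, Lp.coeFn_zero (E := ℝ) (p := 1) (μ := μ)] with ω hω h0'
    rw [← hω, h0']
    rfl
  -- pointwise facts
  have hae : ∀ᵐ ω ∂μ, ∀ i,
      (∑ j, hfun i j ω = f i ω) ∧ (∑ j, |hfun i j ω| ≤ |f i ω|) := by
    filter_upwards [h0] with ω hω i
    have hPN : ∀ k, max (f k ω) 0 - max (-(f k ω)) 0 = f k ω := fun k =>
      max_zero_sub_max_neg_zero_eq_self (f k ω)
    have hSneg : ∑ k, max (-(f k ω)) 0 = ∑ k, max (f k ω) 0 := by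
      have h2 : ∑ k, (max (f k ω) 0 - max (-(f k ω)) 0) = 0 := by
        rw [Finset.sum_congr rfl fun k _ => hPN k]; exact hω
      rw [Finset.sum_sub_distrib] at h2
      linarith
    have hc := transport_core (fun k => max (f k ω) 0) (fun k => max (-(f k ω)) 0)
      (fun k => le_max_right _ _) (fun k => le_max_right _ _) hSneg i
    refine ⟨?_, ?_⟩
    · rw [show ∑ j, hfun i j ω = _ from rfl]
      simpa [hPN i] using hc.1
    · simpa [max_zero_add_max_neg_zero_eq_abs_self (f i ω)] using hc.2
  have hanti : ∀ i j ω, hfun j i ω = - hfun i j ω := by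
    intro i j ω
    simp only [hhfun]
    rw [← neg_div]
    ring_nf
  -- measurability
  have hfm : ∀ i, AEMeasurable (f i) μ := fun i => (Lp.aestronglyMeasurable (G i)).aemeasurable
  have hPm : ∀ i, AEMeasurable (fun ω => max (f i ω) 0) μ := fun i =>
    (hfm i).max aemeasurable_const
  have hNm : ∀ i, AEMeasurable (fun ω => max (-(f i ω)) 0) μ := fun i =>
    (hfm i).neg.max aemeasurable_const
  have hSm : AEMeasurable (fun ω => ∑ k, max (f k ω) 0) μ :=
    Finset.aemeasurable_fun_sum _ fun k _ => hPm k
  have hm : ∀ i j, AEStronglyMeasurable (hfun i j) μ := fun i j =>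
    ((((hPm i).mul (hNm j)).sub ((hPm j).mul (hNm i))).div hSm).aestronglyMeasurable
  -- integrability
  have hbd : ∀ i j, ∀ᵐ ω ∂μ, ‖hfun i j ω‖ ≤ ‖f i ω‖ := by
    intro i j
    filter_upwards [hae] with ω hω
    rw [Real.norm_eq_abs, Real.norm_eq_abs]
    exact le_trans (Finset.single_le_sum (f := fun j' => |hfun i j' ω|)
      (fun j' _ => abs_nonneg _) (Finset.mem_univ j)) (hω i).2
  have hib : ∀ i j, Integrable (hfun i j) μ := fun i j =>
    Integrable.mono (hint i) (hm i j) (hbd i j)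
  set H : Fin n → Fin n → Lp ℝ 1 μ := fun i j =>
    (memLp_one_iff_integrable.mpr (hib i j)).toLp (hfun i j) with hH
  have coeH : ∀ i j, ⇑(H i j) =ᵐ[μ] hfun i j := fun i j => MemLp.coeFn_toLp _
  have coeHall : ∀ᵐ ω ∂μ, ∀ i j, H i j ω = hfun i j ω := by
    rw [ae_all_iff]; intro i; rw [ae_all_iff]; intro j; exact coeH i j
  -- row sums
  have hrow : ∀ i, ∑ j, H i j = G i := by
    intro i
    apply Lp.ext (p := (1 : ℝ≥0∞))
    filter_upwards [lp_coeFn_sum Finset.univ (H i), coeHall, hae] with ω h1 h2 h3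
    rw [h1, Finset.sum_congr rfl fun j _ => h2 i j, (h3 i).1]
  have hcol : ∀ j, ∑ i, H i j = - G j := by
    intro j
    apply Lp.ext (p := (1 : ℝ≥0∞))
    filter_upwards [lp_coeFn_sum Finset.univ (fun i => H i j), coeHall, hae,
      Lp.coeFn_neg (G j)] with ω h1 h2 h3 h4
    rw [h1, Finset.sum_congr rfl fun i _ => h2 i j, h4]
    have : ∑ i, hfun i j ω = - ∑ i, hfun j i ω := by
      rw [← Finset.sum_neg_distrib]
      exact Finset.sum_congr rfl fun i _ => by rw [hanti j i ω]
    rw [this, (h3 j).1]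
    rfl
  -- norms
  have hnrm : ∀ i j, ‖H i j‖ = ∫ ω, |hfun i j ω| ∂μ := by
    intro i j
    rw [L1.norm_eq_integral_norm]
    refine integral_congr_ae ?_
    filter_upwards [coeH i j] with ω hω
    rw [Real.norm_eq_abs, hω]
  have hGnrm : ∀ i, ‖G i‖ = ∫ ω, |f i ω| ∂μ := by
    intro i
    rw [L1.norm_eq_integral_norm]
    simp [Real.norm_eq_abs]
    rfl
  have hrownrm : ∀ i, ∑ j, ‖H i j‖ ≤ ‖G i‖ := by
    intro i
    rw [hGnrm i]
    calc ∑ j, ‖H i j‖ = ∑ j, ∫ ω, |hfun i j ω| ∂μ :=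
          Finset.sum_congr rfl fun j _ => hnrm i j
      _ = ∫ ω, ∑ j, |hfun i j ω| ∂μ :=
          (integral_finset_sum Finset.univ fun j _ => (hib i j).abs).symm
      _ ≤ ∫ ω, |f i ω| ∂μ := by
          refine integral_mono_ae (integrable_finset_sum _ fun j _ => (hib i j).abs)
            (hint i).abs ?_
          filter_upwards [hae] with ω hω
          exact (hω i).2
  refine ⟨H, hrow, hcol, hrownrm, fun j => ?_⟩
  calc ∑ i, ‖H i j‖ = ∑ i, ‖H j i‖ := by
        refine Finset.sum_congr rfl fun i _ => ?_
        rw [hnrm i j, hnrm j i]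
        refine integral_congr_ae (Filter.Eventually.of_forall fun ω => ?_)
        show |hfun i j ω| = |hfun j i ω|
        rw [hanti j i ω, abs_neg]
      _ ≤ ‖G j‖ := hrownrm j

end LpTransport

section Star

variable {X : Type*} [NormedAddCommGroup X] [NormedSpace ℝ X]

theorem sum_eval_le (hX : IsL1Predual X) {n : ℕ} (x : Fin n → X) (r : Fin n → ℝ)
    (hr : ∀ i, 0 ≤ r i) (hpair : ∀ i j, ‖x i - x j‖ ≤ r i + r j)
    (G : Fin n → StrongDual ℝ X) (hsum : ∑ i, G i = 0) :
    ∑ i, G i (x i) ≤ ∑ i, r i * ‖G i‖ := by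
  obtain ⟨Ω, _, μ, ⟨Φ⟩⟩ := hX
  have hsum' : ∑ i, Φ (G i) = 0 := by rw [← map_sum, hsum, map_zero]
  obtain ⟨H, hrow, hcol, hrn, hcn⟩ := lp_transport (fun i => Φ (G i)) hsum'
  set K : Fin n → Fin n → StrongDual ℝ X := fun i j => Φ.symm (H i j) with hK
  have hKrow : ∀ i, ∑ j, K i j = G i := fun i => by
    rw [hK]
    rw [← map_sum, hrow i, LinearIsometryEquiv.symm_apply_apply]
  have hKcol : ∀ j, ∑ i, K i j = - G j := fun j => by
    rw [hK]
    rw [← map_sum, hcol j, map_neg, LinearIsometryEquiv.symm_apply_apply]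
  have hKnorm : ∀ i j, ‖K i j‖ = ‖H i j‖ := fun i j => LinearIsometryEquiv.norm_map _ _
  have hΦnorm : ∀ i, ‖Φ (G i)‖ = ‖G i‖ := fun i => LinearIsometryEquiv.norm_map _ _
  have eA : ∑ i, ∑ j, (K i j) (x i) = ∑ i, G i (x i) := by
    refine Finset.sum_congr rfl fun i _ => ?_
    rw [← ContinuousLinearMap.sum_apply, hKrow i]
  have eB : ∑ i, ∑ j, (K i j) (x j) = - ∑ i, G i (x i) := by
    rw [Finset.sum_comm, ← Finset.sum_neg_distrib]
    refine Finset.sum_congr rfl fun j _ => ?_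
    rw [← ContinuousLinearMap.sum_apply, hKcol j, ContinuousLinearMap.neg_apply]
  have key : 2 * ∑ i, G i (x i) = ∑ i, ∑ j, (K i j) (x i - x j) := by
    have : ∑ i, ∑ j, (K i j) (x i - x j)
        = ∑ i, ∑ j, ((K i j) (x i) - (K i j) (x j)) := by
      refine Finset.sum_congr rfl fun i _ => Finset.sum_congr rfl fun j _ => ?_
      rw [map_sub]
    rw [this]
    simp only [Finset.sum_sub_distrib]
    rw [eA, eB]
    ring
  have bound : ∑ i, ∑ j, (K i j) (x i - x j) ≤ ∑ i, ∑ j, ‖H i j‖ * (r i + r j) := by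
    refine Finset.sum_le_sum fun i _ => Finset.sum_le_sum fun j _ => ?_
    calc (K i j) (x i - x j) ≤ ‖K i j‖ * ‖x i - x j‖ :=
          le_trans (le_abs_self _) ((K i j).le_opNorm _)
      _ ≤ ‖H i j‖ * (r i + r j) := by
          rw [hKnorm i j]
          exact mul_le_mul_of_nonneg_left (hpair i j) (norm_nonneg _)
  have split : ∑ i, ∑ j, ‖H i j‖ * (r i + r j) ≤ 2 * ∑ i, r i * ‖G i‖ := by
    have e1 : ∑ i, ∑ j, ‖H i j‖ * r i ≤ ∑ i, r i * ‖G i‖ := by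
      refine Finset.sum_le_sum fun i _ => ?_
      rw [← Finset.sum_mul, mul_comm]
      refine mul_le_mul_of_nonneg_left ?_ (hr i)
      exact (hrn i).trans (hΦnorm i).le
    have e2 : ∑ i, ∑ j, ‖H i j‖ * r j ≤ ∑ i, r i * ‖G i‖ := by
      rw [Finset.sum_comm]
      refine Finset.sum_le_sum fun j _ => ?_
      rw [← Finset.sum_mul, mul_comm]
      refine mul_le_mul_of_nonneg_left ?_ (hr j)
      exact (hcn j).trans (hΦnorm j).le
    calc ∑ i, ∑ j, ‖H i j‖ * (r i + r j)
        = (∑ i, ∑ j, ‖H i j‖ * r i) + ∑ i, ∑ j, ‖H i j‖ * r j := by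
          simp only [mul_add, Finset.sum_add_distrib]
      _ ≤ 2 * ∑ i, r i * ‖G i‖ := by linarith
  linarith

end Star

section HB

variable {X : Type*} [NormedAddCommGroup X] [NormedSpace ℝ X]

set_option maxHeartbeats 1000000 in
/-- Finite ε-intersection property of pairwise intersecting balls in an L₁-predual. -/
theorem finite_eps_fin (hX : IsL1Predual X) {n : ℕ} (hn : 0 < n) (x : Fin n → X)
    (r : Fin n → ℝ) (hr : ∀ i, 0 ≤ r i) (hpair : ∀ i j, ‖x i - x j‖ ≤ r i + r j)
    {ε : ℝ} (hε : 0 < ε) :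
    ∃ z : X, ∀ i, ‖z - x i‖ ≤ r i + ε := by
  classical
  by_contra hcon
  push_neg at hcon
  haveI : Nonempty (Fin n) := ⟨⟨0, hn⟩⟩
  have hne : (Finset.univ : Finset (Fin n)).Nonempty := Finset.univ_nonempty
  set m : ((Fin n → X) × (Fin n → ℝ)) → X → ℝ :=
    fun v z => Finset.univ.sup' hne (fun i => ‖v.1 i - z‖ + v.2 i) with hm
  have hml : ∀ v (z : X) (i : Fin n), v.2 i ≤ m v z := fun v z i =>
    le_trans (le_add_of_nonneg_left (norm_nonneg _))
      (Finset.le_sup' (fun i => ‖v.1 i - z‖ + v.2 i) (Finset.mem_univ i))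
  have hbdd : ∀ v, BddBelow (Set.range (m v)) := fun v =>
    ⟨v.2 ⟨0, hn⟩, fun a ⟨z, hz⟩ => hz ▸ hml v z _⟩
  have hrne : ∀ v, (Set.range (m v)).Nonempty := fun v => ⟨m v 0, 0, rfl⟩
  set p : ((Fin n → X) × (Fin n → ℝ)) → ℝ := fun v => sInf (Set.range (m v)) with hp
  have p_le : ∀ v (z : X), p v ≤ m v z := fun v z => csInf_le (hbdd v) ⟨z, rfl⟩
  have le_p : ∀ v (b : ℝ), (∀ z, b ≤ m v z) → b ≤ p v := fun v b h =>
    le_csInf (hrne v) fun a ⟨z, hz⟩ => hz ▸ h z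
  -- subadditivity
  have m_add : ∀ a b (z₁ z₂ : X), m (a + b) (z₁ + z₂) ≤ m a z₁ + m b z₂ := by
    intro a b z₁ z₂
    refine Finset.sup'_le _ _ fun i _ => ?_
    have hv : (a + b).1 i - (z₁ + z₂) = (a.1 i - z₁) + (b.1 i - z₂) := by
      simp only [Prod.fst_add, Pi.add_apply]; abel
    have h2 : (a + b).2 i = a.2 i + b.2 i := rfl
    rw [hv, h2]
    have h1 := norm_add_le (a.1 i - z₁) (b.1 i - z₂)
    have h3 := Finset.le_sup' (fun i => ‖a.1 i - z₁‖ + a.2 i) (Finset.mem_univ i)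
    have h4 := Finset.le_sup' (fun i => ‖b.1 i - z₂‖ + b.2 i) (Finset.mem_univ i)
    linarith
  have N_add : ∀ a b, p (a + b) ≤ p a + p b := by
    intro a b
    refine le_of_forall_pos_le_add fun δ hδ => ?_
    obtain ⟨t₁, ⟨z₁, hz₁⟩, ht₁⟩ := exists_lt_of_csInf_lt (hrne a)
      (show sInf (Set.range (m a)) < p a + δ / 2 by
        have := half_pos hδ; linarith)
    obtain ⟨t₂, ⟨z₂, hz₂⟩, ht₂⟩ := exists_lt_of_csInf_lt (hrne b)
      (show sInf (Set.range (m b)) < p b + δ / 2 by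
        have := half_pos hδ; linarith)
    have h5 := m_add a b z₁ z₂
    have h6 := p_le (a + b) (z₁ + z₂)
    rw [← hz₁] at ht₁; rw [← hz₂] at ht₂
    linarith
  -- positive homogeneity
  have m_smul : ∀ (c : ℝ), 0 < c → ∀ v (z : X), m (c • v) (c • z) = c * m v z := by
    intro c hc v z
    have key : ∀ i : Fin n, ‖(c • v).1 i - c • z‖ + (c • v).2 i
        = c * (‖v.1 i - z‖ + v.2 i) := by
      intro i
      have h1 : (c • v).1 i = c • (v.1 i) := rfl
      have h2 : (c • v).2 i = c * v.2 i := rfl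
      rw [h1, h2, ← smul_sub, norm_smul, Real.norm_eq_abs, abs_of_pos hc]
      ring
    refine le_antisymm (Finset.sup'_le _ _ fun i _ => ?_) ?_
    · rw [key i]
      exact mul_le_mul_of_nonneg_left
        (Finset.le_sup' (fun i => ‖v.1 i - z‖ + v.2 i) (Finset.mem_univ i)) hc.le
    · rw [mul_comm, ← le_div_iff₀ hc]
      refine Finset.sup'_le _ _ fun i _ => ?_
      rw [le_div_iff₀ hc, mul_comm, ← key i]
      exact Finset.le_sup' (fun i => ‖(c • v).1 i - c • z‖ + (c • v).2 i) (Finset.mem_univ i)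
  have N_hom : ∀ (c : ℝ), 0 < c → ∀ v, p (c • v) = c * p v := by
    intro c hc v
    refine le_antisymm ?_ ?_
    · rw [mul_comm, ← div_le_iff₀ hc]
      refine le_p _ _ fun z => ?_
      rw [div_le_iff₀ hc]
      calc p (c • v) ≤ m (c • v) (c • z) := p_le _ _
        _ = c * m v z := m_smul c hc v z
        _ = m v z * c := mul_comm _ _
    · refine le_p _ _ fun z => ?_
      have hz : z = c • (c⁻¹ • z) := by rw [smul_smul, mul_inv_cancel₀ (ne_of_gt hc), one_smul]
      rw [hz, m_smul c hc v _]
      exact mul_le_mul_of_nonneg_left (p_le v _) hc.le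
  have p0 : p 0 = 0 := by
    refine le_antisymm ?_ (le_p _ _ fun z => ?_)
    · refine le_trans (p_le 0 0) ?_
      refine Finset.sup'_le _ _ fun i _ => ?_
      simp
    · refine le_trans ?_ (Finset.le_sup'
        (fun i => ‖(0 : (Fin n → X) × (Fin n → ℝ)).1 i - z‖ + (0 : (Fin n → X) × (Fin n → ℝ)).2 i)
        (Finset.mem_univ ⟨0, hn⟩))
      simp [norm_nonneg]
  -- the extremal element
  set e : (Fin n → X) × (Fin n → ℝ) := (x, fun i => -(r i)) with he
  have hpe : ε ≤ p e := by
    refine le_p _ _ fun z => ?_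
    obtain ⟨i, hi⟩ := hcon z
    refine le_trans ?_ (Finset.le_sup' (fun i => ‖e.1 i - z‖ + e.2 i) (Finset.mem_univ i))
    show ε ≤ ‖x i - z‖ + -(r i)
    rw [norm_sub_rev]
    linarith
  have he0 : e ≠ 0 := by
    intro h
    rw [h, p0] at hpe
    linarith
  -- Hahn–Banach extension
  set f : ((Fin n → X) × (Fin n → ℝ)) →ₗ.[ℝ] ℝ := LinearPMap.mkSpanSingleton e (p e) he0
    with hfdef
  have happ : ∀ (t : ℝ) (h : t • e ∈ f.domain), f ⟨t • e, h⟩ = t * p e := by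
    intro t h
    have h1 := LinearPMap.mkSpanSingleton'_apply e (p e)
      (fun c hc => by
        rw [smul_eq_zero] at hc
        rcases hc with h' | h'
        · rw [h', RingHom.id_apply, zero_smul]
        · exact absurd h' he0) t h
    exact h1.trans (by rw [smul_eq_mul, RingHom.id_apply])
  have hf : ∀ v : f.domain, f v ≤ p v := by
    rintro ⟨w, hw⟩
    obtain ⟨t, ht⟩ := Submodule.mem_span_singleton.1 hw
    have hsub : (⟨w, hw⟩ : f.domain) = ⟨t • e, ht ▸ hw⟩ := Subtype.ext ht.symm
    rw [hsub, happ t _]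
    show t * p e ≤ p (t • e)
    rcases lt_trichotomy t 0 with htn | htz | htp
    · have hrepr : t • e = (-t) • (-e) := by rw [neg_smul, smul_neg, neg_neg]
      have h1 : p (t • e) = (-t) * p (-e) := by rw [hrepr, N_hom (-t) (by linarith)]
      have h2 : 0 ≤ p e + p (-e) := by
        have h3 := N_add e (-e)
        rw [add_neg_cancel, p0] at h3
        linarith
      rw [h1]
      nlinarith
    · rw [htz, zero_smul, p0, zero_mul]
    · rw [N_hom t htp]
  obtain ⟨g, hge, hgp⟩ := exists_extension_of_le_sublinear f p N_hom N_add hf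
  have hgeval : g e = p e := by
    have hmem1 : (1 : ℝ) • e ∈ f.domain := by
      rw [one_smul]; exact Submodule.mem_span_singleton_self e
    have h3 := happ 1 hmem1
    have h1 := hge ⟨(1 : ℝ) • e, hmem1⟩
    rw [h3] at h1
    simpa using h1
  -- components of g
  set gX : Fin n → X →ₗ[ℝ] ℝ := fun i =>
    { toFun := fun z => g (Pi.single i z, 0)
      map_add' := fun z w => by
        rw [← map_add]
        show g (Pi.single i (z + w), 0) = g ((Pi.single i z, 0) + (Pi.single i w, 0))
        congr 1
        refine Prod.ext ?_ ?_
        · simp [Prod.fst_add, ← Pi.single_add]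
        · simp
      map_smul' := fun c z => by
        simp only [RingHom.id_apply]
        rw [← _root_.map_smul]
        show g (Pi.single i (c • z), 0) = g (c • ((Pi.single i z, 0) : (Fin n → X) × (Fin n → ℝ)))
        congr 1
        refine Prod.ext ?_ ?_
        · simp [Prod.smul_fst, ← Pi.single_smul]
        · simp } with hgX
  set β : Fin n → ℝ := fun i => g (0, Pi.single i 1) with hβ
  have hgXapply : ∀ i z, gX i z = g (Pi.single i z, 0) := fun i z => rfl
  have hsingle_snd : ∀ (i : Fin n) (c : ℝ), g (0, Pi.single i c) = c * β i := by
    intro i c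
    have h1 : ((0, Pi.single i c) : (Fin n → X) × (Fin n → ℝ))
        = c • ((0, Pi.single i 1) : (Fin n → X) × (Fin n → ℝ)) := by
      refine Prod.ext ?_ ?_
      · simp
      · simp [Prod.smul_snd, ← Pi.single_smul]
    rw [h1, _root_.map_smul, smul_eq_mul, hβ]
  -- test evaluations
  have hbeta_nonneg : ∀ i, 0 ≤ β i := by
    intro i
    have h1 : g (0, Pi.single i (-1)) ≤ p (0, Pi.single i (-1)) := hgp _
    have h2 : p ((0, Pi.single i (-1)) : (Fin n → X) × (Fin n → ℝ)) ≤ 0 := by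
      refine le_trans (p_le _ 0) ?_
      refine Finset.sup'_le _ _ fun j _ => ?_
      rcases eq_or_ne j i with hj | hj
      · subst hj; simp
      · simp [Pi.single_apply, hj]
    rw [hsingle_snd i (-1)] at h1
    linarith
  have hsum_gX : ∀ z : X, ∑ i, gX i z = 0 := by
    have key : ∀ z : X, ∑ i, gX i z ≤ 0 := by
      intro z
      have h1 : ∑ i, gX i z = g (fun _ => z, 0) := by
        have h0 : ∑ i, gX i z = ∑ i, g (Pi.single i z, 0) := rfl
        rw [h0, ← map_sum]
        congr 1
        refine Prod.ext ?_ ?_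
        · rw [Prod.fst_sum]
          exact Finset.univ_sum_single (fun _ => z)
        · rw [Prod.snd_sum]
          simp
      have h2 : p ((fun _ => z, 0) : (Fin n → X) × (Fin n → ℝ)) ≤ 0 := by
        refine le_trans (p_le _ z) ?_
        refine Finset.sup'_le _ _ fun j _ => ?_
        simp
      rw [h1]
      exact le_trans (hgp _) h2
    intro z
    have h1 := key z
    have h2 := key (-z)
    have h3 : ∑ i, gX i (-z) = - ∑ i, gX i z := by
      rw [← Finset.sum_neg_distrib]
      exact Finset.sum_congr rfl fun i _ => map_neg (gX i) z
    rw [h3] at h2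
    linarith
  have hgX_bound : ∀ i (z : X), gX i z ≤ β i * ‖z‖ := by
    intro i z
    have h1 : g (Pi.single i z, Pi.single i (-‖z‖)) ≤ p (Pi.single i z, Pi.single i (-‖z‖)) :=
      hgp _
    have h2 : p ((Pi.single i z, Pi.single i (-‖z‖)) : (Fin n → X) × (Fin n → ℝ)) ≤ 0 := by
      refine le_trans (p_le _ 0) ?_
      refine Finset.sup'_le _ _ fun j _ => ?_
      rcases eq_or_ne j i with hj | hj
      · subst hj; simp
      · simp [Pi.single_apply, hj]
    have h3 : ((Pi.single i z, Pi.single i (-‖z‖)) : (Fin n → X) × (Fin n → ℝ))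
        = (Pi.single i z, 0) + (0, Pi.single i (-‖z‖)) := by
      refine Prod.ext ?_ ?_ <;> simp
    have h4 := le_trans h1 h2
    rw [h3, map_add, hsingle_snd i (-‖z‖)] at h4
    rw [hgXapply]
    linarith
  have hgX_abs : ∀ i (z : X), |gX i z| ≤ β i * ‖z‖ := by
    intro i z
    rw [abs_le]
    constructor
    · have := hgX_bound i (-z)
      rw [map_neg, norm_neg] at this
      linarith
    · exact hgX_bound i z
  -- the dual functionals
  set G : Fin n → StrongDual ℝ X := fun i =>
    LinearMap.mkContinuous (gX i) (β i) (fun z => by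
      rw [Real.norm_eq_abs]; exact hgX_abs i z) with hG
  have hGapply : ∀ i z, G i z = gX i z := fun i z => rfl
  have hGnorm : ∀ i, ‖G i‖ ≤ β i := fun i =>
    LinearMap.mkContinuous_norm_le _ (hbeta_nonneg i) _
  have hGsum : ∑ i, G i = 0 := by
    refine ContinuousLinearMap.ext fun z => ?_
    rw [ContinuousLinearMap.sum_apply, ContinuousLinearMap.zero_apply]
    exact hsum_gX z
  have hmain := sum_eval_le hX x r hr hpair G hGsum
  -- decompose g e
  have hdecomp : g e = ∑ i, gX i (x i) + ∑ i, (-(r i)) * β i := by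
    have h1 : e = (∑ i, ((Pi.single i (x i), 0) : (Fin n → X) × (Fin n → ℝ)))
        + ∑ i, ((0, Pi.single i (-(r i))) : (Fin n → X) × (Fin n → ℝ)) := by
      refine Prod.ext ?_ ?_
      · rw [Prod.fst_add, Prod.fst_sum, Prod.fst_sum]
        simp [Finset.univ_sum_single, he]
      · rw [Prod.snd_add, Prod.snd_sum, Prod.snd_sum]
        simp only [he]
        rw [Finset.sum_const_zero, zero_add]
        exact (Finset.univ_sum_single (fun i => -(r i))).symm
    rw [h1, map_add, map_sum, map_sum]
    congr 1
    exact Finset.sum_congr rfl fun i _ => (hsingle_snd i (-(r i)))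
  have hfinal : ∑ i, gX i (x i) ≤ ∑ i, r i * β i := by
    calc ∑ i, gX i (x i) = ∑ i, G i (x i) := Finset.sum_congr rfl fun i _ => rfl
      _ ≤ ∑ i, r i * ‖G i‖ := hmain
      _ ≤ ∑ i, r i * β i :=
          Finset.sum_le_sum fun i _ => mul_le_mul_of_nonneg_left (hGnorm i) (hr i)
  have : g e ≤ 0 := by
    rw [hdecomp]
    have : ∑ i, (-(r i)) * β i = - ∑ i, r i * β i := by
      rw [← Finset.sum_neg_distrib]
      exact Finset.sum_congr rfl fun i _ => by ring
    rw [this]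
    linarith
  rw [hgeval] at this
  linarith

end HB

section Approx

variable {X : Type*} [NormedAddCommGroup X] [NormedSpace ℝ X]

theorem finite_eps (hX : IsL1Predual X) {ι : Type*} (s : Finset ι) (hs : s.Nonempty)
    (c : ι → X) (r : ι → ℝ) (hr : ∀ i ∈ s, 0 ≤ r i)
    (hpair : ∀ i ∈ s, ∀ j ∈ s, ‖c i - c j‖ ≤ r i + r j) {ε : ℝ} (hε : 0 < ε) :
    ∃ z : X, ∀ i ∈ s, ‖z - c i‖ ≤ r i + ε := by
  classical
  have hn : 0 < s.card := Finset.card_pos.mpr hs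
  set eqv := s.equivFin with heqv
  obtain ⟨z, hz⟩ := finite_eps_fin hX hn (fun k => c (eqv.symm k : ι))
    (fun k => r (eqv.symm k : ι)) (fun k => hr _ (eqv.symm k).2)
    (fun k l => hpair _ (eqv.symm k).2 _ (eqv.symm l).2) hε
  refine ⟨z, fun i hi => ?_⟩
  have := hz (eqv ⟨i, hi⟩)
  rwa [Equiv.symm_apply_apply] at this

lemma rMax_bddAbove {F : Set X} (hF : IsCompact F) (x : X) :
    BddAbove ((fun b => ‖x - b‖) '' F) :=
  ((hF.image ((continuous_const.sub continuous_id).norm)).bddAbove)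

lemma le_rMax {F : Set X} (hF : IsCompact F) (x : X) {f : X} (hf : f ∈ F) :
    ‖x - f‖ ≤ rMax x F :=
  le_csSup (rMax_bddAbove hF x) ⟨f, hf, rfl⟩

lemma rMax_le {F : Set X} (hne : F.Nonempty) {x : X} {a : ℝ}
    (h : ∀ f ∈ F, ‖x - f‖ ≤ a) : rMax x F ≤ a :=
  csSup_le (hne.image _) (by rintro t ⟨f, hf, rfl⟩; exact h f hf)

lemma rMax_nonneg {F : Set X} (hne : F.Nonempty) (hF : IsCompact F) (x : X) :
    0 ≤ rMax x F := by
  obtain ⟨f, hf⟩ := hne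
  exact le_trans (norm_nonneg (x - f)) (le_rMax hF x hf)

lemma le_chebRad {V F : Set X} (hVne : V.Nonempty) {a : ℝ}
    (h : ∀ v ∈ V, a ≤ rMax v F) : a ≤ chebRad V F :=
  le_csInf (hVne.image _) (by rintro t ⟨v, hv, rfl⟩; exact h v hv)

lemma chebRad_le {V F : Set X} (hne : F.Nonempty) (hF : IsCompact F) {v : X} (hv : v ∈ V) :
    chebRad V F ≤ rMax v F :=
  csInf_le ⟨0, by rintro t ⟨w, _, rfl⟩; exact rMax_nonneg hne hF w⟩ ⟨v, hv, rfl⟩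

lemma chebRad_univ_nonneg {F : Set X} (hne : F.Nonempty) (hF : IsCompact F) :
    0 ≤ chebRad (Set.univ : Set X) F :=
  le_chebRad ⟨0, Set.mem_univ 0⟩ fun v _ => rMax_nonneg hne hF v

lemma diam_le {F : Set X} (hne : F.Nonempty) (hF : IsCompact F) {f f' : X}
    (hf : f ∈ F) (hf' : f' ∈ F) : ‖f - f'‖ ≤ 2 * chebRad (Set.univ : Set X) F := by
  have h1 : ∀ v : X, ‖f - f'‖ / 2 ≤ rMax v F := by
    intro v
    have h2 : ‖f - f'‖ ≤ ‖v - f‖ + ‖v - f'‖ := by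
      calc ‖f - f'‖ = ‖(f - v) + (v - f')‖ := by abel_nf
        _ ≤ ‖f - v‖ + ‖v - f'‖ := norm_add_le _ _
        _ = ‖v - f‖ + ‖v - f'‖ := by rw [norm_sub_rev]
    have h3 := le_rMax hF v hf
    have h4 := le_rMax hF v hf'
    linarith
  have := le_chebRad (V := (Set.univ : Set X)) ⟨0, Set.mem_univ 0⟩ fun v _ => h1 v
  linarith

/-- One approximation step. -/
lemma approx_step (hX : IsL1Predual X) {F : Set X} (hne : F.Nonempty) (hF : IsCompact F)
    (x : X) {δ b : ℝ} (hδ : 0 < δ) (hb : 0 ≤ b) (y : X)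
    (h1 : ∀ f ∈ F, ‖y - f‖ ≤ chebRad (Set.univ : Set X) F + b)
    (h2 : ‖y - x‖ ≤ rMax x F - chebRad (Set.univ : Set X) F + b) :
    ∃ y' : X, (∀ f ∈ F, ‖y' - f‖ ≤ chebRad (Set.univ : Set X) F + δ)
      ∧ ‖y' - x‖ ≤ rMax x F - chebRad (Set.univ : Set X) F + δ ∧ ‖y' - y‖ ≤ b + δ := by
  classical
  set r := chebRad (Set.univ : Set X) F with hrdef
  set R := rMax x F with hRdef
  have hrnn : 0 ≤ r := chebRad_univ_nonneg hne hF
  have hRr : r ≤ R := chebRad_le hne hF (Set.mem_univ x)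
  have hε : 0 < δ / 4 := by linarith
  obtain ⟨t, htsub, htfin, htcover⟩ := finite_cover_balls_of_compact hF hε
  set cen : Option (Option X) → X :=
    fun o => Option.elim o y (fun o' => Option.elim o' x id) with hcen
  set rad : Option (Option X) → ℝ :=
    fun o => Option.elim o (b + δ / 4) (fun o' => Option.elim o' (R - r + δ / 4)
      (fun _ => r + δ / 4)) with hrad
  set s : Finset (Option (Option X)) :=
    insert none (insert (some none) (htfin.toFinset.image (fun f => some (some f)))) with hs
  have hmem : ∀ i ∈ s, i = none ∨ i = some none ∨ ∃ f, f ∈ F ∧ i = some (some f) := by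
    intro i hi
    rcases Finset.mem_insert.1 hi with h | h
    · exact Or.inl h
    rcases Finset.mem_insert.1 h with h' | h'
    · exact Or.inr (Or.inl h')
    obtain ⟨f, hf, rfl⟩ := Finset.mem_image.1 h'
    exact Or.inr (Or.inr ⟨f, htsub (htfin.mem_toFinset.1 hf), rfl⟩)
  have hrpos : ∀ i ∈ s, 0 ≤ rad i := by
    intro i hi
    rcases hmem i hi with rfl | rfl | ⟨f, hf, rfl⟩
    · show 0 ≤ b + δ / 4; linarith
    · show 0 ≤ R - r + δ / 4; linarith
    · show 0 ≤ r + δ / 4; linarith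
  have hA : ∀ i ∈ s, (cen i = y ∧ rad i = b + δ / 4) ∨ (cen i = x ∧ rad i = R - r + δ / 4)
      ∨ ∃ f, f ∈ F ∧ cen i = f ∧ rad i = r + δ / 4 := by
    intro i hi
    rcases hmem i hi with rfl | rfl | ⟨f, hf, rfl⟩
    · exact Or.inl ⟨rfl, rfl⟩
    · exact Or.inr (Or.inl ⟨rfl, rfl⟩)
    · exact Or.inr (Or.inr ⟨f, hf, rfl, rfl⟩)
  have hpair : ∀ i ∈ s, ∀ j ∈ s, ‖cen i - cen j‖ ≤ rad i + rad j := by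
    have hyx : ‖y - x‖ ≤ (b + δ / 4) + (R - r + δ / 4) := by
      have := h2; linarith
    have hyf : ∀ f ∈ F, ‖y - f‖ ≤ (b + δ / 4) + (r + δ / 4) := by
      intro f hf; have := h1 f hf; linarith
    have hxf : ∀ f ∈ F, ‖x - f‖ ≤ (R - r + δ / 4) + (r + δ / 4) := by
      intro f hf
      have := le_rMax hF x hf
      linarith
    intro i hi j hj
    rcases hA i hi with ⟨hc1, hr1⟩ | ⟨hc1, hr1⟩ | ⟨f, hf, hc1, hr1⟩ <;>
      rcases hA j hj with ⟨hc2, hr2⟩ | ⟨hc2, hr2⟩ | ⟨f', hf', hc2, hr2⟩ <;>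
      rw [hc1, hc2, hr1, hr2] <;>
      first
        | (simp only [sub_self, norm_zero]; linarith)
        | (have := hyx; linarith)
        | (rw [norm_sub_rev]; have := hyx; linarith)
        | (have := hyf _ hf; linarith)
        | (have := hyf _ hf'; linarith)
        | (rw [norm_sub_rev]; have := hyf _ hf; linarith)
        | (rw [norm_sub_rev]; have := hyf _ hf'; linarith)
        | (have := hxf _ hf; linarith)
        | (have := hxf _ hf'; linarith)
        | (rw [norm_sub_rev]; have := hxf _ hf; linarith)
        | (rw [norm_sub_rev]; have := hxf _ hf'; linarith)
        | (have := diam_le hne hF hf hf'; linarith)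
  obtain ⟨z, hz⟩ := finite_eps hX s ⟨none, Finset.mem_insert_self _ _⟩ cen rad hrpos hpair hε
  have hzy : ‖z - y‖ ≤ b + δ := by
    have := hz none (Finset.mem_insert_self _ _)
    have h4 : rad none = b + δ / 4 := rfl
    have h5 : cen none = y := rfl
    rw [h4, h5] at this
    linarith
  have hzx : ‖z - x‖ ≤ R - r + δ := by
    have := hz (some none) (Finset.mem_insert.2 (Or.inr (Finset.mem_insert_self _ _)))
    have h4 : rad (some none) = R - r + δ / 4 := rfl
    have h5 : cen (some none) = x := rfl
    rw [h4, h5] at this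
    linarith
  refine ⟨z, fun f hf => ?_, hzx, hzy⟩
  obtain ⟨f₀, hf₀t, hff₀⟩ : ∃ f₀ ∈ t, f ∈ Metric.ball f₀ (δ / 4) := by
    have := htcover hf
    simpa using this
  have hmem₀ : some (some f₀) ∈ s := by
    refine Finset.mem_insert.2 (Or.inr (Finset.mem_insert.2 (Or.inr ?_)))
    exact Finset.mem_image.2 ⟨f₀, htfin.mem_toFinset.2 hf₀t, rfl⟩
  have h6 := hz (some (some f₀)) hmem₀
  have h7 : rad (some (some f₀)) = r + δ / 4 := rfl
  have h8 : cen (some (some f₀)) = f₀ := rfl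
  rw [h7, h8] at h6
  have h9 : ‖f₀ - f‖ < δ / 4 := by
    have := Metric.mem_ball.1 hff₀
    rwa [dist_comm, dist_eq_norm] at this
  calc ‖z - f‖ = ‖(z - f₀) + (f₀ - f)‖ := by abel_nf
    _ ≤ ‖z - f₀‖ + ‖f₀ - f‖ := norm_add_le _ _
    _ ≤ (r + δ / 4 + δ / 4) + δ / 4 := by linarith
    _ ≤ r + δ := by linarith

end Approx

section Center

variable {X : Type*} [NormedAddCommGroup X] [NormedSpace ℝ X]

theorem exists_center [CompleteSpace X] (hX : IsL1Predual X) {F : Set X} (hne : F.Nonempty)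
    (hF : IsCompact F) (x : X) :
    ∃ c : X, (∀ f ∈ F, ‖c - f‖ ≤ chebRad (Set.univ : Set X) F)
      ∧ ‖c - x‖ ≤ rMax x F - chebRad (Set.univ : Set X) F := by
  classical
  set r := chebRad (Set.univ : Set X) F with hrdef
  set R := rMax x F with hRdef
  have hrnn : 0 ≤ r := chebRad_univ_nonneg hne hF
  have hRr : r ≤ R := chebRad_le hne hF (Set.mem_univ x)
  set b : ℕ → ℝ := fun k => (R - r + 1) * (1 / 2) ^ k with hb
  have hb0 : ∀ k, 0 < b k := by
    intro k
    have h1 : (0 : ℝ) < (1 / 2 : ℝ) ^ k := by positivity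
    have h2 : 0 < R - r + 1 := by linarith
    exact mul_pos h2 h1
  have hbs : ∀ k, b (k + 1) = b k / 2 := by
    intro k
    simp only [hb, pow_succ]
    ring
  have hstep : ∀ (k : ℕ) (y : X), (∀ f ∈ F, ‖y - f‖ ≤ r + b k) → (‖y - x‖ ≤ R - r + b k) →
      ∃ y', (∀ f ∈ F, ‖y' - f‖ ≤ r + b (k + 1)) ∧ (‖y' - x‖ ≤ R - r + b (k + 1))
        ∧ ‖y' - y‖ ≤ b k + b (k + 1) :=
    fun k y hy1 hy2 => approx_step hX hne hF x (hb0 (k + 1)) (hb0 k).le y hy1 hy2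
  choose! next hn1 hn2 hn3 using hstep
  set u : ℕ → X := fun k => Nat.rec x (fun k yk => next k yk) k with hu
  have hus : ∀ k, u (k + 1) = next k (u k) := fun k => rfl
  have hprop : ∀ k, (∀ f ∈ F, ‖u k - f‖ ≤ r + b k) ∧ (‖u k - x‖ ≤ R - r + b k) := by
    intro k
    induction k with
    | zero =>
      constructor
      · intro f hf
        have h3 := le_rMax hF x hf
        have h4 : b 0 = R - r + 1 := by simp [hb]
        show ‖x - f‖ ≤ r + b 0
        rw [h4]
        linarith
      · show ‖x - x‖ ≤ R - r + b 0
        simp only [sub_self, norm_zero]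
        have := hb0 0
        linarith
    | succ k ih =>
      rw [hus k]
      exact ⟨hn1 k (u k) ih.1 ih.2, hn2 k (u k) ih.1 ih.2⟩
  have hclose : ∀ k, dist (u k) (u (k + 1)) ≤ (2 * (R - r + 1)) * (1 / 2) ^ k := by
    intro k
    have h5 := hn3 k (u k) (hprop k).1 (hprop k).2
    rw [← hus k] at h5
    have h6 : b k + b (k + 1) ≤ 2 * b k := by
      rw [hbs k]
      have := hb0 k
      linarith
    rw [dist_eq_norm, norm_sub_rev]
    calc ‖u (k + 1) - u k‖ ≤ b k + b (k + 1) := h5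
      _ ≤ 2 * b k := h6
      _ = (2 * (R - r + 1)) * (1 / 2) ^ k := by rw [hb]; ring
  have hcauchy : CauchySeq u :=
    cauchySeq_of_le_geometric (1 / 2) (2 * (R - r + 1)) (by norm_num) hclose
  obtain ⟨c, hc⟩ := cauchySeq_tendsto_of_complete hcauchy
  have hbtend : Filter.Tendsto b Filter.atTop (nhds 0) := by
    have h7 : Filter.Tendsto (fun k : ℕ => (1 / 2 : ℝ) ^ k) Filter.atTop (nhds 0) := by
      refine tendsto_pow_atTop_nhds_zero_of_lt_one (by norm_num) (by norm_num)
    have h8 := h7.const_mul (R - r + 1)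
    rw [mul_zero] at h8
    exact h8
  refine ⟨c, fun f hf => ?_, ?_⟩
  · have hlim : Filter.Tendsto (fun k => ‖u k - f‖) Filter.atTop (nhds ‖c - f‖) :=
      ((hc.sub_const f).norm)
    have hlim2 : Filter.Tendsto (fun k => r + b k) Filter.atTop (nhds r) := by
      have := hbtend.const_add r
      rwa [add_zero] at this
    exact le_of_tendsto_of_tendsto' hlim hlim2 fun k => (hprop k).1 f hf
  · have hlim : Filter.Tendsto (fun k => ‖u k - x‖) Filter.atTop (nhds ‖c - x‖) :=
      ((hc.sub_const x).norm)
    have hlim2 : Filter.Tendsto (fun k => (R - r) + b k) Filter.atTop (nhds (R - r)) := by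
      have := hbtend.const_add (R - r)
      rwa [add_zero] at this
    exact le_of_tendsto_of_tendsto' hlim hlim2 fun k => (hprop k).2

end Center


/-- In an `L₁`-predual space, `rad_V(F) = rad_X(F) + d(V, cent_X(F))` for nonempty compact
`F` and nonempty closed convex `V`. -/
theorem chebRad_restricted_eq_of_isL1Predual {X : Type*} [NormedAddCommGroup X]
    [NormedSpace ℝ X] [CompleteSpace X] (hX : IsL1Predual X) (F : Set X) (hne : F.Nonempty)
    (hF : IsCompact F) (V : Set X) (hVne : V.Nonempty) (hVcl : IsClosed V)
    (hVco : Convex ℝ V) :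
    chebRad V F = chebRad (Set.univ : Set X) F
      + setDist' V (chebCent (Set.univ : Set X) F) := by
  classical
  set r := chebRad (Set.univ : Set X) F with hrdef
  set C := chebCent (Set.univ : Set X) F with hCdef
  have hCmem : ∀ x : X, ∃ c ∈ C, ‖c - x‖ ≤ rMax x F - r := by
    intro x
    obtain ⟨c, hc1, hc2⟩ := exists_center hX hne hF x
    exact ⟨c, ⟨Set.mem_univ c,
      le_antisymm (rMax_le hne hc1) (chebRad_le hne hF (Set.mem_univ c))⟩, hc2⟩
  obtain ⟨v₀, hv₀⟩ := hVne
  obtain ⟨c₀, hc₀, _⟩ := hCmem v₀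
  set D := ((fun p : X × X => ‖p.1 - p.2‖) '' (V ×ˢ C)) with hDdef
  have hDne : D.Nonempty := ⟨_, ⟨(v₀, c₀), ⟨hv₀, hc₀⟩, rfl⟩⟩
  have hDbdd : BddBelow D := ⟨0, by rintro t ⟨p, _, rfl⟩; exact norm_nonneg _⟩
  have hDeq : setDist' V C = sInf D := rfl
  have hge : r + setDist' V C ≤ chebRad V F := by
    refine le_csInf (Set.Nonempty.image _ ⟨v₀, hv₀⟩) ?_
    rintro t ⟨v, hv, rfl⟩
    obtain ⟨c, hc, hcle⟩ := hCmem v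
    have hd : sInf D ≤ ‖v - c‖ := csInf_le hDbdd ⟨(v, c), ⟨hv, hc⟩, rfl⟩
    rw [norm_sub_rev] at hcle
    rw [hDeq]
    linarith
  have hle : chebRad V F ≤ r + setDist' V C := by
    have key : chebRad V F - r ≤ sInf D := by
      refine le_csInf hDne ?_
      rintro t ⟨⟨v, c⟩, ⟨hv, hc⟩, rfl⟩
      have h1 : chebRad V F ≤ rMax v F := chebRad_le hne hF hv
      have h2 : rMax v F ≤ ‖v - c‖ + rMax c F := by
        refine rMax_le hne fun f hf => ?_
        calc ‖v - f‖ = ‖(v - c) + (c - f)‖ := by abel_nf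
          _ ≤ ‖v - c‖ + ‖c - f‖ := norm_add_le _ _
          _ ≤ ‖v - c‖ + rMax c F := by
              have := le_rMax hF c hf; linarith
      have h3 : rMax c F = r := hc.2
      show chebRad V F - r ≤ ‖(v, c).1 - (v, c).2‖
      simp only
      linarith
    rw [hDeq]
    linarith
  linarith
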